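/- arXiv:2501.14843 — 4 statements merged into one kernel-verified Lean document; each statement's English description precedes it below -/
import Mathlib

section
/- Fix T > 0, let (E, ℰ) be a measurable space with a σ-finite measure λ, and let λ_T be the product of Lebesgue measure on [0,T] with λ. Let G : [0,T] × E → [0,∞) be measurable with ∫_{[0,T]×E} G² dλ_T < ∞, and suppose there exists δ > 0 such that ∫_X exp(δ G²) dλ_T < ∞ for every measurable X ⊆ [0,T] × E with λ_T(X) < ∞. Then for every Υ > 0, sup_{ρ ∈ S̃^Υ} ∫_{[0,T]×E} G(s,ξ) |ρ(s,ξ) − 1| dλ_T(s,ξ) < ∞. -/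
/-!
With `l = klFun`, whose convex conjugate is `x ↦ exp x - 1`, the Fenchel–Young inequality applied
at `±x` together with `cosh x ≤ exp (x ^ 2 / 2)` gives `x * |b - 1| ≤ 2 * (exp (x ^ 2 / 2) - 1) + l b`.
Taking `x = √(2δ) * G` bounds `G * |ρ - 1|` by `(2 * (exp (δ * G ^ 2) - 1) + l ρ) / √(2δ)`.
The function `exp (δ * G ^ 2) - 1` is integrable: it is at most `δ * exp δ * G ^ 2` where `G ^ 2 < 1`,
and `{1 ≤ G ^ 2}` has finite measure by Chebyshev, so there `exp (δ * G ^ 2)` is integrable by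
assumption. Integrating gives a bound depending on `ρ` only through `∫ l ρ ≤ Υ`.
-/

open MeasureTheory Real InformationTheory

lemma mul_le_exp_sub_one_add_klFun (x : ℝ) {b : ℝ} (hb : 0 ≤ b) :
    x * b ≤ exp x - 1 + klFun b := by
  rcases hb.eq_or_lt with rfl | hb
  · simp [klFun_zero, (exp_pos x).le]
  · have h := add_one_le_exp (x - log b)
    rw [exp_sub, exp_log hb, le_div_iff₀ hb] at h
    rw [klFun_apply]
    linarith

lemma mul_abs_sub_one_le_klFun (x : ℝ) {b : ℝ} (hb : 0 ≤ b) :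
    x * |b - 1| ≤ 2 * (exp (x ^ 2 / 2) - 1) + klFun b := by
  have hpos := add_one_le_exp x
  have hneg := add_one_le_exp (-x)
  have hcosh : exp x + exp (-x) ≤ 2 * exp (x ^ 2 / 2) := by
    have := cosh_le_exp_half_sq x
    rw [cosh_eq] at this
    linarith
  rcases abs_cases (b - 1) with ⟨h, -⟩ | ⟨h, -⟩ <;> rw [h]
  · linarith [mul_le_exp_sub_one_add_klFun x hb]
  · linarith [mul_le_exp_sub_one_add_klFun (-x) hb]

lemma mul_abs_sub_one_le_exp_mul_sq {δ : ℝ} (hδ : 0 < δ) (y : ℝ) {b : ℝ} (hb : 0 ≤ b) :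
    y * |b - 1| ≤ (√(2 * δ))⁻¹ * (2 * (exp (δ * y ^ 2) - 1) + klFun b) := by
  have h := mul_abs_sub_one_le_klFun (√(2 * δ) * y) hb
  have hx : (√(2 * δ) * y) ^ 2 / 2 = δ * y ^ 2 := by
    rw [mul_pow, sq_sqrt (by positivity)]
    ring
  rw [hx] at h
  rw [le_inv_mul_iff₀ (by positivity)]
  linarith

lemma exp_sub_one_le_mul_exp {t : ℝ} : exp t - 1 ≤ t * exp t := by
  have h := mul_le_mul_of_nonneg_left (one_sub_le_exp_neg t) (exp_pos t).le
  rw [← exp_add, add_neg_cancel, exp_zero] at h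
  linarith

section

variable {α : Type*} [MeasurableSpace α] {μ : Measure α}

lemma integrable_exp_mul_sub_one {g : α → ℝ} {δ : ℝ} (hgm : Measurable g) (hg0 : ∀ a, 0 ≤ g a)
    (hg : Integrable g μ) (hδ : 0 ≤ δ)
    (hexp : ∀ X, MeasurableSet X → μ X < ⊤ → IntegrableOn (fun a => exp (δ * g a)) X μ) :
    Integrable (fun a => exp (δ * g a) - 1) μ := by
  set A := {a | 1 ≤ g a}
  have hA : MeasurableSet A := measurableSet_le measurable_const hgm
  have hdom : Integrable (fun a => δ * exp δ * g a + A.indicator (fun a => exp (δ * g a)) a) μ :=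
    (hg.const_mul _).add ((hexp A hA (hg.measure_ge_lt_top one_pos)).integrable_indicator hA)
  refine hdom.mono' ((hgm.const_mul δ).exp.sub_const 1).aestronglyMeasurable
    (ae_of_all _ fun a => ?_)
  have hδg : 0 ≤ δ * g a := mul_nonneg hδ (hg0 a)
  rw [norm_of_nonneg (sub_nonneg.2 (one_le_exp hδg))]
  by_cases ha : a ∈ A
  · rw [Set.indicator_of_mem ha]
    nlinarith [exp_pos δ]
  · rw [Set.indicator_of_notMem ha, add_zero]
    have hexp_le : exp (δ * g a) ≤ exp δ :=
      exp_le_exp.2 (mul_le_of_le_one_right hδ (le_of_not_ge ha))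
    calc exp (δ * g a) - 1 ≤ δ * g a * exp (δ * g a) := exp_sub_one_le_mul_exp
      _ ≤ δ * exp δ * g a := by nlinarith

lemma lintegral_ofReal_le_mul_integral_add {f u v : α → ℝ} {c V : ℝ} (hc : 0 ≤ c) (hV : 0 ≤ V)
    (hu : Integrable u μ) (hu0 : 0 ≤ᵐ[μ] u)
    (hv : ∫⁻ a, ENNReal.ofReal (v a) ∂μ ≤ ENNReal.ofReal V) (hf : ∀ a, f a ≤ c * (u a + v a)) :
    ∫⁻ a, ENNReal.ofReal (f a) ∂μ ≤ ENNReal.ofReal (c * (∫ a, u a ∂μ + V)) := by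
  calc ∫⁻ a, ENNReal.ofReal (f a) ∂μ
      ≤ ∫⁻ a, ENNReal.ofReal c * (ENNReal.ofReal (u a) + ENNReal.ofReal (v a)) ∂μ := by
        refine lintegral_mono fun a => (ENNReal.ofReal_le_ofReal (hf a)).trans ?_
        rw [ENNReal.ofReal_mul hc]
        gcongr
        exact ENNReal.ofReal_add_le
    _ = ENNReal.ofReal c * (∫⁻ a, ENNReal.ofReal (u a) ∂μ + ∫⁻ a, ENNReal.ofReal (v a) ∂μ) := by
        rw [lintegral_const_mul' _ _ ENNReal.ofReal_ne_top,
          lintegral_add_left' hu.aemeasurable.ennreal_ofReal]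
    _ ≤ ENNReal.ofReal (c * (∫ a, u a ∂μ + V)) := by
        rw [← ofReal_integral_eq_lintegral_ofReal hu hu0, ENNReal.ofReal_mul hc,
          ENNReal.ofReal_add (integral_nonneg_of_ae hu0) hV]
        gcongr

end

theorem sup_integral_G_abs_rho_sub_one_lt_top_general
    {E : Type*} [MeasurableSpace E]
    (lamT : Measure (ℝ × E))
    (G : ℝ × E → ℝ) (hGmeas : Measurable G)
    (hGsq : Integrable (fun p => G p ^ 2) lamT)
    (δ : ℝ) (hδ : 0 < δ)
    (hexp : ∀ X : Set (ℝ × E), MeasurableSet X → lamT X < ⊤ →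
      IntegrableOn (fun p => Real.exp (δ * G p ^ 2)) X lamT)
    (Υ : ℝ) (hΥ : 0 < Υ) :
    ∃ C : ℝ, ∀ ρ : ℝ × E → ℝ, Measurable ρ → (∀ p, 0 ≤ ρ p) →
      (∫⁻ p, ENNReal.ofReal (ρ p * Real.log (ρ p) - ρ p + 1) ∂lamT
        ≤ ENNReal.ofReal Υ) →
      ∫⁻ p, ENNReal.ofReal (G p * |ρ p - 1|) ∂lamT ≤ ENNReal.ofReal C := by
  have hφ : Integrable (fun p => 2 * (exp (δ * G p ^ 2) - 1)) lamT :=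
    (integrable_exp_mul_sub_one (hGmeas.pow_const 2) (fun p => sq_nonneg _) hGsq hδ.le
      hexp).const_mul 2
  have hφ0 : ∀ p, 0 ≤ 2 * (exp (δ * G p ^ 2) - 1) := fun p => by
    have := one_le_exp (mul_nonneg hδ.le (sq_nonneg (G p)))
    linarith
  refine ⟨(√(2 * δ))⁻¹ * (∫ p, 2 * (exp (δ * G p ^ 2) - 1) ∂lamT + Υ),
    fun ρ _ hρ0 hρent => ?_⟩
  have hent : ∫⁻ p, ENNReal.ofReal (klFun (ρ p)) ∂lamT ≤ ENNReal.ofReal Υ := by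
    simpa only [klFun_apply, add_sub_right_comm] using hρent
  exact lintegral_ofReal_le_mul_integral_add (by positivity) hΥ.le hφ (ae_of_all _ hφ0) hent
    fun p => mul_abs_sub_one_le_exp_mul_sq hδ (G p) (hρ0 p)

/-- (Finiteness of the constant `C^Υ_{i,1}` in Lemma 6.7(i).)
Let `λ` be σ-finite on `E`, `λ_T = (Lebesgue on [0,T]) ⊗ λ`, and let `G ≥ 0` be
measurable, square integrable w.r.t. `λ_T`, and exponentially square integrable on
sets of finite `λ_T`-measure.  Then for every `Υ > 0`,
`sup_{ρ ∈ S̃^Υ} ∫ G |ρ − 1| dλ_T < ∞`, where `S̃^Υ` is the set of measurable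
`ρ ≥ 0` with `∫ (ρ log ρ − ρ + 1) dλ_T ≤ Υ`. -/
theorem sup_integral_G_abs_rho_sub_one_lt_top
    {E : Type*} [MeasurableSpace E] (lam : Measure E) [SigmaFinite lam]
    (T : ℝ) (hT : 0 < T)
    (lamT : Measure (ℝ × E))
    (hlamT : lamT = (volume.restrict (Set.Icc (0:ℝ) T)).prod lam)
    (G : ℝ × E → ℝ) (hGmeas : Measurable G) (hGpos : ∀ p, 0 ≤ G p)
    (hGsq : Integrable (fun p => G p ^ 2) lamT)
    (δ : ℝ) (hδ : 0 < δ)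
    (hexp : ∀ X : Set (ℝ × E), MeasurableSet X → lamT X < ⊤ →
      IntegrableOn (fun p => Real.exp (δ * G p ^ 2)) X lamT)
    (Υ : ℝ) (hΥ : 0 < Υ) :
    ∃ C : ℝ, ∀ ρ : ℝ × E → ℝ, Measurable ρ → (∀ p, 0 ≤ ρ p) →
      (∫⁻ p, ENNReal.ofReal (ρ p * Real.log (ρ p) - ρ p + 1) ∂lamT
        ≤ ENNReal.ofReal Υ) →
      ∫⁻ p, ENNReal.ofReal (G p * |ρ p - 1|) ∂lamT ≤ ENNReal.ofReal C :=
  sup_integral_G_abs_rho_sub_one_lt_top_general lamT G hGmeas hGsq δ hδ hexp Υ hΥ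
end

section
/- Fix T > 0, let (E, ℰ) be a measurable space with a σ-finite measure λ, and let λ_T be the product of Lebesgue measure on [0,T] with λ. Let G : [0,T] × E → [0,∞) be measurable with ∫_{[0,T]×E} G² dλ_T < ∞, and suppose there exists δ > 0 such that ∫_X exp(δ G²) dλ_T < ∞ for every measurable X ⊆ [0,T] × E with λ_T(X) < ∞. Then for every Υ > 0, sup_{ρ ∈ S̃^Υ} ∫_{[0,T]×E} G(s,ξ)² (ρ(s,ξ) + 1) dλ_T(s,ξ) < ∞. -/
/-!
Young's inequality for the Legendre pair `u ↦ eᵘ - 1`, `l = klFun` gives, pointwise,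
`G² ρ ≤ δ⁻¹ ((exp (δ G²) - 1) + l ρ)`. Integrating, the entropy bound `∫ l ρ ≤ Υ` controls the
second term, so it remains to see that `exp (δ G²) - 1` is integrable: on the set where
`δ G² > 1`, which has finite measure by Chebyshev, this is the exponential integrability
hypothesis, and elsewhere `|eˣ - 1| ≤ 2 |x|` reduces it to the integrability of `G²`.
-/

open MeasureTheory InformationTheory

lemma mul_le_exp_sub_one_add_klFun_s11 (u : ℝ) {v : ℝ} (hv : 0 ≤ v) :
    u * v ≤ (Real.exp u - 1) + klFun v := by
  rw [klFun_apply]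
  rcases hv.eq_or_lt with rfl | hv
  · simp only [mul_zero, Real.log_zero, sub_zero]
    linarith [Real.exp_pos u]
  · have hexp : v * Real.exp (u - Real.log v) = Real.exp u := by
      rw [Real.exp_sub, Real.exp_log hv]
      field_simp
    nlinarith [mul_le_mul_of_nonneg_left (Real.add_one_le_exp (u - Real.log v)) hv.le]

section

variable {α : Type*} [MeasurableSpace α] {μ : Measure α}

lemma integrable_exp_sub_one {f : α → ℝ} (hf : Measurable f) (hfi : Integrable f μ)
    (hexp : ∀ s, MeasurableSet s → μ s < ⊤ → IntegrableOn (fun x => Real.exp (f x)) s μ) :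
    Integrable (fun x => Real.exp (f x) - 1) μ := by
  set S := {x | 1 < ‖f x‖}
  have hS : MeasurableSet S := measurableSet_lt measurable_const hf.norm
  have hSfin : μ S < ⊤ := hfi.measure_norm_gt_lt_top one_pos
  rw [← integrableOn_univ, ← Set.union_compl_self S]
  refine (hexp S hS hSfin).sub (integrableOn_const hSfin.ne) |>.union ?_
  refine ((hfi.norm.const_mul 2).integrableOn).mono' (by fun_prop) ?_
  filter_upwards [ae_restrict_mem hS.compl] with x hx
  exact Real.abs_exp_sub_one_le (not_lt.1 hx)

lemma lintegral_ofReal_mul_add_one_le {f ρ : α → ℝ} (hf : Measurable f) (hρ : Measurable ρ)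
    (hρ0 : ∀ x, 0 ≤ ρ x) {δ : ℝ} (hδ : 0 < δ) :
    ∫⁻ x, ENNReal.ofReal (f x * (ρ x + 1)) ∂μ ≤
      ENNReal.ofReal δ⁻¹ * (∫⁻ x, ENNReal.ofReal (Real.exp (δ * f x) - 1) ∂μ +
        ∫⁻ x, ENNReal.ofReal (klFun (ρ x)) ∂μ) + ∫⁻ x, ENNReal.ofReal (f x) ∂μ := by
  have hpoint (x : α) : f x * (ρ x + 1) ≤
      δ⁻¹ * ((Real.exp (δ * f x) - 1) + klFun (ρ x)) + f x := by
    have hyoung := mul_le_exp_sub_one_add_klFun_s11 (δ * f x) (hρ0 x)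
    rw [mul_add, mul_one, add_le_add_iff_right, ← div_eq_inv_mul, le_div_iff₀ hδ]
    linarith
  calc ∫⁻ x, ENNReal.ofReal (f x * (ρ x + 1)) ∂μ
      ≤ ∫⁻ x, (ENNReal.ofReal δ⁻¹ * (ENNReal.ofReal (Real.exp (δ * f x) - 1) +
          ENNReal.ofReal (klFun (ρ x))) + ENNReal.ofReal (f x)) ∂μ := by
        refine lintegral_mono fun x => (ENNReal.ofReal_le_ofReal (hpoint x)).trans ?_
        refine ENNReal.ofReal_add_le.trans ?_
        rw [ENNReal.ofReal_mul (inv_nonneg.2 hδ.le)]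
        gcongr
        exact ENNReal.ofReal_add_le
    _ = _ := by
        rw [lintegral_add_right _ hf.ennreal_ofReal, lintegral_const_mul _ (by fun_prop),
          lintegral_add_left (by fun_prop)]

end

theorem sup_integral_G_sq_rho_add_one_lt_top_general
    {E : Type*} [MeasurableSpace E]
    (lamT : Measure (ℝ × E))
    (G : ℝ × E → ℝ) (hGmeas : Measurable G)
    (hGsq : Integrable (fun p => G p ^ 2) lamT)
    (δ : ℝ) (hδ : 0 < δ)
    (hexp : ∀ X : Set (ℝ × E), MeasurableSet X → lamT X < ⊤ →
      IntegrableOn (fun p => Real.exp (δ * G p ^ 2)) X lamT)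
    (Υ : ℝ) :
    ∃ C : ℝ, ∀ ρ : ℝ × E → ℝ, Measurable ρ → (∀ p, 0 ≤ ρ p) →
      (∫⁻ p, ENNReal.ofReal (ρ p * Real.log (ρ p) - ρ p + 1) ∂lamT
        ≤ ENNReal.ofReal Υ) →
      ∫⁻ p, ENNReal.ofReal (G p ^ 2 * (ρ p + 1)) ∂lamT ≤ ENNReal.ofReal C := by
  have hexp_fin := (integrable_exp_sub_one (by fun_prop) (hGsq.const_mul δ) hexp).lintegral_lt_top
  have hG_fin := hGsq.lintegral_lt_top
  refine ⟨(ENNReal.ofReal δ⁻¹ *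
      (∫⁻ p, ENNReal.ofReal (Real.exp (δ * G p ^ 2) - 1) ∂lamT + ENNReal.ofReal Υ) +
      ∫⁻ p, ENNReal.ofReal (G p ^ 2) ∂lamT).toReal, fun ρ hρ hρ0 hent => ?_⟩
  rw [ENNReal.ofReal_toReal (by finiteness)]
  refine (lintegral_ofReal_mul_add_one_le (by fun_prop) hρ hρ0 hδ).trans ?_
  gcongr
  simpa only [klFun_apply, add_sub_right_comm] using hent

/-- (Finiteness of the constant `C^Υ_{i,2}` in Lemma 6.7(i).)
Let `λ` be σ-finite on `E`, `λ_T = (Lebesgue on [0,T]) ⊗ λ`, and let `G ≥ 0` be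
measurable, square integrable w.r.t. `λ_T`, and exponentially square integrable on
sets of finite `λ_T`-measure.  Then for every `Υ > 0`,
`sup_{ρ ∈ S̃^Υ} ∫ G² (ρ + 1) dλ_T < ∞`, where `S̃^Υ` is the set of measurable
`ρ ≥ 0` with `∫ (ρ log ρ − ρ + 1) dλ_T ≤ Υ`. -/
theorem sup_integral_G_sq_rho_add_one_lt_top
    {E : Type*} [MeasurableSpace E] (lam : Measure E) [SigmaFinite lam]
    (T : ℝ) (hT : 0 < T)
    (lamT : Measure (ℝ × E))
    (hlamT : lamT = (volume.restrict (Set.Icc (0:ℝ) T)).prod lam)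
    (G : ℝ × E → ℝ) (hGmeas : Measurable G) (hGpos : ∀ p, 0 ≤ G p)
    (hGsq : Integrable (fun p => G p ^ 2) lamT)
    (δ : ℝ) (hδ : 0 < δ)
    (hexp : ∀ X : Set (ℝ × E), MeasurableSet X → lamT X < ⊤ →
      IntegrableOn (fun p => Real.exp (δ * G p ^ 2)) X lamT)
    (Υ : ℝ) (hΥ : 0 < Υ) :
    ∃ C : ℝ, ∀ ρ : ℝ × E → ℝ, Measurable ρ → (∀ p, 0 ≤ ρ p) →
      (∫⁻ p, ENNReal.ofReal (ρ p * Real.log (ρ p) - ρ p + 1) ∂lamT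
        ≤ ENNReal.ofReal Υ) →
      ∫⁻ p, ENNReal.ofReal (G p ^ 2 * (ρ p + 1)) ∂lamT ≤ ENNReal.ofReal C :=
  sup_integral_G_sq_rho_add_one_lt_top_general lamT G hGmeas hGsq δ hδ hexp Υ
end

section
/- Fix T > 0, Υ > 0. Let E be a locally compact Polish space with its Borel σ-algebra, λ a σ-finite Borel measure on E which is finite on compact sets, and λ_T the product of Lebesgue measure on [0,T] with λ. Let d : [0,T] × E → ℝ be measurable with ∫_{[0,T]×E} |d|² dλ_T < ∞ and such that for every δ₃ > 0 and every measurable X ⊆ [0,T] × E with λ_T(X) < ∞, ∫_X exp(δ₃|d|) dλ_T < ∞. Then for every ε > 0 there exists a compact set K_ε ⊆ E such that sup_{ρ ∈ S̃^Υ} ∫₀ᵀ ∫_{E∖K_ε} |d(s,ξ)| |ρ(s,ξ) − 1| λ(dξ) ds ≤ ε. -/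
/-!
The Fenchel–Young inequality for `ℓ(r) = r log r - r + 1`, whose convex conjugate is `eᵘ - 1`,
gives `σ |d| |ρ - 1| ≤ ℓ(ρ) + (e^{σ|d|} - 1 - σ|d|)` pointwise. Integrating over `ℝ × Kᶜ`,
the entropy term contributes at most `Υ / σ`, which is small once `σ` is large, while the second
term is a single integrable function independent of `ρ`: near `d = 0` it is `O(|d|²)`, and on the
set `{σ|d| ≥ 1}`, of finite measure by Chebyshev, it is controlled by the exponential moment of
`d`. Its integral over `ℝ × Kᶜ` is small for a large compact `K` since `E` is σ-compact.
-/

open MeasureTheory Filter Topology Set Real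
open scoped ENNReal

theorem mul_le_add_exp_sub_one (u : ℝ) {v : ℝ} (hv : 0 ≤ v) :
    u * v ≤ (v * log v - v + 1) + (exp u - 1) := by
  rcases hv.eq_or_lt with rfl | hv
  · simpa using (exp_pos u).le
  have h : v * (u - log v + 1) ≤ exp u :=
    calc v * (u - log v + 1) ≤ v * exp (u - log v) := by gcongr; exact add_one_le_exp _
      _ = exp u := by rw [exp_sub, exp_log hv]; field_simp
  linarith

theorem mul_abs_sub_one_le {u v : ℝ} (hu : 0 ≤ u) (hv : 0 ≤ v) :
    u * |v - 1| ≤ (v * log v - v + 1) + (exp u - 1 - u) := by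
  rcases le_total 1 v with h1 | h1
  · rw [abs_of_nonneg (by linarith)]
    linarith [mul_le_add_exp_sub_one u hv]
  · rw [abs_of_nonpos (by linarith)]
    -- `e^{-u} + u ≤ eᵘ - u` is `u ≤ sinh u`
    have hsinh : u ≤ sinh u := self_le_sinh_iff.2 hu
    rw [sinh_eq] at hsinh
    linarith [mul_le_add_exp_sub_one (-u) hv]

theorem ofReal_mul_abs_sub_one_le {σ u v : ℝ} (hσ : 0 < σ) (hu : 0 ≤ u) (hv : 0 ≤ v) :
    ENNReal.ofReal (u * |v - 1|) ≤ ENNReal.ofReal σ⁻¹ * ENNReal.ofReal (v * log v - v + 1)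
      + ENNReal.ofReal ((exp (σ * u) - 1 - σ * u) / σ) := by
  rw [← ENNReal.ofReal_mul (inv_nonneg.2 hσ.le)]
  refine (ENNReal.ofReal_le_ofReal ?_).trans ENNReal.ofReal_add_le
  calc u * |v - 1| = σ⁻¹ * (σ * u * |v - 1|) := by field_simp
    _ ≤ σ⁻¹ * ((v * log v - v + 1) + (exp (σ * u) - 1 - σ * u)) := by
      gcongr
      exact mul_abs_sub_one_le (by positivity) hv
    _ = _ := by ring

theorem integrable_exp_mul_abs_sub_one_sub {α : Type*} [MeasurableSpace α] {μ : Measure α}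
    {f : α → ℝ} {σ : ℝ} (hf : Measurable f) (hsq : Integrable (fun x => |f x| ^ 2) μ)
    (hexp : ∀ X : Set α, MeasurableSet X → μ X < ⊤ →
      IntegrableOn (fun x => exp (σ * |f x|)) X μ) :
    Integrable (fun x => exp (σ * |f x|) - 1 - σ * |f x|) μ := by
  set F : Set α := {x | 1 ≤ (σ * |f x|) ^ 2}
  have hsq' : Integrable (fun x => (σ * |f x|) ^ 2) μ := by
    simpa only [mul_pow] using hsq.const_mul (σ ^ 2)
  have hF : MeasurableSet F := measurableSet_le measurable_const (by fun_prop)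
  have hFfin : μ F < ⊤ := hsq'.measure_ge_lt_top one_pos
  refine Integrable.mono' (hsq'.add ((hexp F hF hFfin).integrable_indicator hF))
    (by fun_prop) (Eventually.of_forall fun x => ?_)
  have hnonneg : 0 ≤ exp (σ * |f x|) - 1 - σ * |f x| := by linarith [add_one_le_exp (σ * |f x|)]
  rw [norm_of_nonneg hnonneg]
  simp only [Pi.add_apply]
  by_cases hx : x ∈ F
  · rw [indicator_of_mem hx]
    nlinarith [sq_nonneg (σ * |f x| + 1)]
  · rw [indicator_of_notMem hx, add_zero]
    have hsmall := (sq_le_one_iff_abs_le_one (σ * |f x|)).1 (not_le.1 hx).le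
    exact (le_abs_self _).trans (abs_exp_sub_one_sub_id_le hsmall)

theorem tendsto_setLIntegral_of_antitone {α : Type*} [MeasurableSpace α] {μ : Measure α}
    {f : α → ℝ≥0∞} (hf : ∫⁻ x, f x ∂μ ≠ ∞) {s : ℕ → Set α} (hs : ∀ n, MeasurableSet (s n))
    (hanti : Antitone s) (hempty : ⋂ n, s n = ∅) :
    Tendsto (fun n => ∫⁻ x in s n, f x ∂μ) atTop (𝓝 0) := by
  have hfin : μ.withDensity f univ ≠ ∞ := by rwa [withDensity_apply _ .univ, Measure.restrict_univ]
  have h := tendsto_measure_iInter_atTop (fun n => (hs n).nullMeasurableSet) hanti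
    ⟨0, measure_ne_top_of_subset (subset_univ _) hfin⟩
  rw [hempty, measure_empty] at h
  simpa only [Function.comp_def, withDensity_apply _ (hs _)] using h

theorem exists_isCompact_setLIntegral_univ_prod_compl_le {α E : Type*} [MeasurableSpace α]
    [TopologicalSpace E] [T2Space E] [SigmaCompactSpace E] [MeasurableSpace E]
    [OpensMeasurableSpace E] {μ : Measure (α × E)} {f : α × E → ℝ≥0∞}
    (hf : ∫⁻ p, f p ∂μ ≠ ∞) {η : ℝ≥0∞} (hη : 0 < η) :
    ∃ K : Set E, IsCompact K ∧ ∫⁻ p in (univ : Set α) ×ˢ Kᶜ, f p ∂μ ≤ η := by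
  have htend := tendsto_setLIntegral_of_antitone hf
    (s := fun n => (univ : Set α) ×ˢ (compactCovering E n)ᶜ)
    (fun n => MeasurableSet.univ.prod (isCompact_compactCovering E n).measurableSet.compl)
    (fun m n hmn => prod_mono le_rfl (compl_subset_compl.2 (compactCovering_subset E hmn)))
    (by
      refine eq_empty_of_forall_notMem fun p hp => ?_
      obtain ⟨n, hn⟩ := mem_iUnion.1 ((iUnion_compactCovering E).symm ▸ mem_univ p.2)
      exact (mem_iInter.1 hp n).2 hn)
  obtain ⟨n, hn⟩ := (htend.eventually (gt_mem_nhds hη)).exists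
  exact ⟨compactCovering E n, isCompact_compactCovering E n, hn.le⟩

theorem tightness_of_controls_general
    {E : Type*} [TopologicalSpace E] [PolishSpace E] [LocallyCompactSpace E]
    [MeasurableSpace E] [BorelSpace E]
    (Υ : ℝ) (hΥ : 0 < Υ)
    (lamT : Measure (ℝ × E))
    (d : ℝ × E → ℝ) (hdmeas : Measurable d)
    (hdsq : Integrable (fun p => |d p| ^ 2) lamT)
    (hexp : ∀ δ₃ : ℝ, 0 < δ₃ → ∀ X : Set (ℝ × E), MeasurableSet X → lamT X < ⊤ →
      IntegrableOn (fun p => Real.exp (δ₃ * |d p|)) X lamT) :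
    ∀ ε : ℝ, 0 < ε → ∃ K : Set E, IsCompact K ∧
      ∀ ρ : ℝ × E → ℝ, Measurable ρ → (∀ p, 0 ≤ ρ p) →
        (∫⁻ p, ENNReal.ofReal (ρ p * Real.log (ρ p) - ρ p + 1) ∂lamT
          ≤ ENNReal.ofReal Υ) →
        ∫⁻ p in (Set.univ : Set ℝ) ×ˢ Kᶜ,
            ENNReal.ofReal (|d p| * |ρ p - 1|) ∂lamT ≤ ENNReal.ofReal ε := by
  intro ε hε
  set σ : ℝ := 2 * Υ / ε
  have hσ : 0 < σ := by positivity
  set g : ℝ × E → ℝ := fun p => (exp (σ * |d p|) - 1 - σ * |d p|) / σ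
  have hg : Integrable g lamT :=
    (integrable_exp_mul_abs_sub_one_sub hdmeas hdsq (hexp σ hσ)).div_const σ
  have hgmeas : Measurable fun p => ENNReal.ofReal (g p) := by fun_prop
  obtain ⟨K, hK, htail⟩ := exists_isCompact_setLIntegral_univ_prod_compl_le
    hg.lintegral_lt_top.ne (ENNReal.ofReal_pos.2 (half_pos hε))
  have hσΥ : ENNReal.ofReal σ⁻¹ * ENNReal.ofReal Υ = ENNReal.ofReal (ε / 2) := by
    rw [← ENNReal.ofReal_mul (by positivity)]
    congr 1
    simp only [σ]
    field_simp
  refine ⟨K, hK, fun ρ _ hρ hent => ?_⟩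
  calc ∫⁻ p in univ ×ˢ Kᶜ, ENNReal.ofReal (|d p| * |ρ p - 1|) ∂lamT
      ≤ ∫⁻ p in univ ×ˢ Kᶜ, (ENNReal.ofReal σ⁻¹ *
          ENNReal.ofReal (ρ p * log (ρ p) - ρ p + 1) + ENNReal.ofReal (g p)) ∂lamT :=
        lintegral_mono fun p => ofReal_mul_abs_sub_one_le hσ (abs_nonneg _) (hρ p)
    _ = ENNReal.ofReal σ⁻¹ * ∫⁻ p in univ ×ˢ Kᶜ, ENNReal.ofReal (ρ p * log (ρ p) - ρ p + 1) ∂lamT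
          + ∫⁻ p in univ ×ˢ Kᶜ, ENNReal.ofReal (g p) ∂lamT := by
        rw [lintegral_add_right _ hgmeas, lintegral_const_mul' _ _ ENNReal.ofReal_ne_top]
    _ ≤ ENNReal.ofReal σ⁻¹ * ENNReal.ofReal Υ + ENNReal.ofReal (ε / 2) := by
        gcongr
        exact (setLIntegral_le_lintegral _ _).trans hent
    _ = ENNReal.ofReal ε := by
        rw [hσΥ, ← ENNReal.ofReal_add (by positivity) (by positivity), add_halves]

/-- (Lemma 6.9(ii): uniform tightness.)  Let `E` be a locally compact
Polish space, `λ` a σ-finite Borel measure on `E` finite on compacts,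
`λ_T = (Lebesgue on [0,T]) ⊗ λ`, and let `d` be measurable, square integrable w.r.t.
`λ_T`, and exponentially integrable on sets of finite `λ_T`-measure for every rate
`δ₃ > 0`.  Then for every `ε > 0` there is a compact `K_ε ⊆ E` such that
`sup_{ρ ∈ S̃^Υ} ∫₀ᵀ∫_{E∖K_ε} |d| |ρ − 1| dλ ds ≤ ε`. -/
theorem tightness_of_controls
    {E : Type*} [TopologicalSpace E] [PolishSpace E] [LocallyCompactSpace E]
    [MeasurableSpace E] [BorelSpace E]
    (lam : Measure E) [SigmaFinite lam] [IsFiniteMeasureOnCompacts lam]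
    (T : ℝ) (hT : 0 < T) (Υ : ℝ) (hΥ : 0 < Υ)
    (lamT : Measure (ℝ × E))
    (hlamT : lamT = (volume.restrict (Set.Icc (0:ℝ) T)).prod lam)
    (d : ℝ × E → ℝ) (hdmeas : Measurable d)
    (hdsq : Integrable (fun p => |d p| ^ 2) lamT)
    (hexp : ∀ δ₃ : ℝ, 0 < δ₃ → ∀ X : Set (ℝ × E), MeasurableSet X → lamT X < ⊤ →
      IntegrableOn (fun p => Real.exp (δ₃ * |d p|)) X lamT) :
    ∀ ε : ℝ, 0 < ε → ∃ K : Set E, IsCompact K ∧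
      ∀ ρ : ℝ × E → ℝ, Measurable ρ → (∀ p, 0 ≤ ρ p) →
        (∫⁻ p, ENNReal.ofReal (ρ p * Real.log (ρ p) - ρ p + 1) ∂lamT
          ≤ ENNReal.ofReal Υ) →
        ∫⁻ p in (Set.univ : Set ℝ) ×ˢ Kᶜ,
            ENNReal.ofReal (|d p| * |ρ p - 1|) ∂lamT ≤ ENNReal.ofReal ε :=
  tightness_of_controls_general Υ hΥ lamT d hdmeas hdsq hexp
end

section
/- Fix T > 0, Υ > 0. Let E be a locally compact Polish space with its Borel σ-algebra, λ a σ-finite Borel measure on E which is finite on compact sets, and λ_T the product of Lebesgue measure on [0,T] with λ. Let d : [0,T] × E → ℝ be measurable with ∫_{[0,T]×E} |d|² dλ_T < ∞ and such that for every δ₃ > 0 and every measurable X ⊆ [0,T] × E with λ_T(X) < ∞, ∫_X exp(δ₃|d|) dλ_T < ∞. Then for every compact set K ⊆ E, lim_{M→∞} sup_{ρ ∈ S̃^Υ} ∫₀ᵀ ∫_K |d(s,ξ)| · 1_{{|d(s,ξ)| ≥ M}} · ρ(s,ξ) λ(dξ) ds = 0. -/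
/-!
The paper's `l` is Mathlib's `klFun`, the convex conjugate of `exp` up to a shift, whence Young's
inequality `x y ≤ eˣ + l(y)`. With `x = σ|d|` it bounds `∫ |d| ρ` over `{|d| ≥ M}` by
`σ⁻¹ (∫ e^{σ|d|} + Υ)`. On `{|d| ≥ M}` one has `e^{σ|d|} ≤ e^{-σM} e^{2σ|d|}`, and `e^{2σ|d|}` is
integrable over the finite-measure set `[0,T] × K`, so the first term is `≤ Υ` for `M` large;
taking `σ = 2Υ/ε` gives the bound `ε` uniformly in `ρ`.
-/

open MeasureTheory Real InformationTheory Filter Topology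

lemma Real.mul_le_exp_add_klFun (x : ℝ) {y : ℝ} (hy : 0 ≤ y) : x * y ≤ exp x + klFun y := by
  rcases hy.eq_or_lt with rfl | hy
  · simpa using (exp_pos x).le.trans (le_add_of_nonneg_right (klFun_nonneg le_rfl))
  calc x * y = y * (x - log y + 1) + (y * log y - y) := by ring
    _ ≤ y * exp (x - log y) + (y * log y - y) := by gcongr; exact add_one_le_exp _
    _ = exp x + (klFun y - 1) := by
      rw [exp_sub, exp_log hy, mul_div_cancel₀ _ hy.ne', klFun_apply]; ring
    _ ≤ exp x + klFun y := by linarith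

section

variable {α : Type*} [MeasurableSpace α] (μ : Measure α)

lemma lintegral_ofReal_mul_le_exp_add_klFun {f ρ : α → ℝ} (hf : Measurable f)
    (hρ : ∀ x, 0 ≤ ρ x) {σ : ℝ} (hσ : 0 < σ) :
    ∫⁻ x, ENNReal.ofReal (f x * ρ x) ∂μ ≤
      ENNReal.ofReal σ⁻¹ * (∫⁻ x, ENNReal.ofReal (exp (σ * f x)) ∂μ +
        ∫⁻ x, ENNReal.ofReal (klFun (ρ x)) ∂μ) := by
  rw [← lintegral_add_left (hf.const_mul σ).exp.ennreal_ofReal,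
    ← lintegral_const_mul' _ _ ENNReal.ofReal_ne_top]
  refine lintegral_mono fun x => ?_
  rw [← ENNReal.ofReal_add (exp_pos _).le (klFun_nonneg (hρ x)),
    ← ENNReal.ofReal_mul (inv_nonneg.2 hσ.le)]
  refine ENNReal.ofReal_le_ofReal ((le_inv_mul_iff₀ hσ).2 ?_)
  simpa only [mul_assoc] using mul_le_exp_add_klFun (σ * f x) (hρ x)

lemma setLIntegral_exp_le_of_le {f : α → ℝ} (hf : Measurable f) {σ : ℝ} (hσ : 0 ≤ σ)
    (s : Set α) (M : ℝ) :
    ∫⁻ x in s ∩ {x | M ≤ f x}, ENNReal.ofReal (exp (σ * f x)) ∂μ ≤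
      ENNReal.ofReal (exp (-(σ * M))) *
        ∫⁻ x in s, ENNReal.ofReal (exp (2 * σ * f x)) ∂μ := by
  rw [← lintegral_const_mul' _ _ ENNReal.ofReal_ne_top]
  calc ∫⁻ x in s ∩ {x | M ≤ f x}, ENNReal.ofReal (exp (σ * f x)) ∂μ
      ≤ ∫⁻ x in s ∩ {x | M ≤ f x},
          ENNReal.ofReal (exp (-(σ * M))) * ENNReal.ofReal (exp (2 * σ * f x)) ∂μ := by
        refine setLIntegral_mono
          (((hf.const_mul _).exp.ennreal_ofReal).const_mul _) fun x hx => ?_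
        rw [← ENNReal.ofReal_mul (exp_pos _).le, ← exp_add]
        have : σ * M ≤ σ * f x := mul_le_mul_of_nonneg_left hx.2 hσ
        exact ENNReal.ofReal_le_ofReal (exp_le_exp.2 (by linarith))
    _ ≤ _ := lintegral_mono_set Set.inter_subset_left

end

lemma ENNReal.tendsto_ofReal_exp_neg_mul_mul_atTop {σ : ℝ} (hσ : 0 < σ) {C : ENNReal}
    (hC : C ≠ ⊤) : Tendsto (fun M => ENNReal.ofReal (exp (-(σ * M))) * C) atTop (𝓝 0) := by
  have h := ENNReal.Tendsto.mul_const (ENNReal.tendsto_ofReal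
    (tendsto_exp_neg_atTop_nhds_zero.comp (tendsto_id.const_mul_atTop hσ))) (Or.inr hC)
  simpa only [ENNReal.ofReal_zero, zero_mul, Function.comp_def, id] using h

theorem truncation_estimate_of_controls_general
    {E : Type*} [TopologicalSpace E] [PolishSpace E]
    [MeasurableSpace E] [BorelSpace E]
    (lam : Measure E) [IsFiniteMeasureOnCompacts lam]
    (T : ℝ) (Υ : ℝ) (hΥ : 0 < Υ)
    (lamT : Measure (ℝ × E))
    (hlamT : lamT = (volume.restrict (Set.Icc (0:ℝ) T)).prod lam)
    (d : ℝ × E → ℝ) (hdmeas : Measurable d)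
    (hexp : ∀ δ₃ : ℝ, 0 < δ₃ → ∀ X : Set (ℝ × E), MeasurableSet X → lamT X < ⊤ →
      IntegrableOn (fun p => Real.exp (δ₃ * |d p|)) X lamT) :
    ∀ K : Set E, IsCompact K →
      ∀ ε : ℝ, 0 < ε → ∃ M₀ : ℝ, ∀ M : ℝ, M₀ ≤ M →
        ∀ ρ : ℝ × E → ℝ, Measurable ρ → (∀ p, 0 ≤ ρ p) →
          (∫⁻ p, ENNReal.ofReal (ρ p * Real.log (ρ p) - ρ p + 1) ∂lamT
            ≤ ENNReal.ofReal Υ) →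
          ∫⁻ p in ((Set.univ : Set ℝ) ×ˢ K) ∩ {p : ℝ × E | M ≤ |d p|},
              ENNReal.ofReal (|d p| * ρ p) ∂lamT ≤ ENNReal.ofReal ε := by
  intro K hK ε hε
  set X := (Set.univ : Set ℝ) ×ˢ K
  have hXfin : lamT X < ⊤ := by
    refine hlamT ▸ (Measure.prod_prod_le _ _).trans_lt (ENNReal.mul_lt_top ?_ hK.measure_lt_top)
    simpa only [Measure.restrict_apply_univ] using measure_Icc_lt_top
  set σ := 2 * Υ / ε with hσ_def
  have hσ : 0 < σ := by positivity
  have hC := (hexp (2 * σ) (by positivity) X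
    (MeasurableSet.univ.prod hK.isClosed.measurableSet) hXfin).lintegral_lt_top.ne
  obtain ⟨M₀, hM₀⟩ := eventually_atTop.1 ((ENNReal.tendsto_ofReal_exp_neg_mul_mul_atTop hσ
    hC).eventually (eventually_le_nhds (ENNReal.ofReal_pos.2 hΥ)))
  refine ⟨M₀, fun M hM ρ _ hρ hent => ?_⟩
  have hentropy : ∫⁻ p, ENNReal.ofReal (klFun (ρ p)) ∂lamT ≤ ENNReal.ofReal Υ := by
    simpa only [klFun_apply, add_sub_right_comm] using hent
  calc _ ≤ ENNReal.ofReal σ⁻¹ *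
          (∫⁻ p in X ∩ {p | M ≤ |d p|}, ENNReal.ofReal (exp (σ * |d p|)) ∂lamT +
            ∫⁻ p in X ∩ {p | M ≤ |d p|}, ENNReal.ofReal (klFun (ρ p)) ∂lamT) :=
        lintegral_ofReal_mul_le_exp_add_klFun _ hdmeas.abs hρ hσ
    _ ≤ ENNReal.ofReal σ⁻¹ * (ENNReal.ofReal Υ + ENNReal.ofReal Υ) := by
        gcongr
        · exact (setLIntegral_exp_le_of_le lamT hdmeas.abs hσ.le X M).trans (hM₀ M hM)
        · exact (setLIntegral_le_lintegral _ _).trans hentropy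
    _ = ENNReal.ofReal ε := by
        rw [← ENNReal.ofReal_add hΥ.le hΥ.le, ← ENNReal.ofReal_mul (inv_nonneg.2 hσ.le)]
        congr 1
        rw [hσ_def]
        field_simp
        ring

/-- (Lemma 6.9(iii): uniform truncation estimate.)  Let `E` be a
locally compact Polish space, `λ` a σ-finite Borel measure on `E` finite on compacts,
`λ_T = (Lebesgue on [0,T]) ⊗ λ`, and let `d` be measurable, square integrable w.r.t.
`λ_T`, and exponentially integrable on sets of finite `λ_T`-measure for every rate
`δ₃ > 0`.  Then for every compact `K ⊆ E`,
`lim_{M→∞} sup_{ρ ∈ S̃^Υ} ∫₀ᵀ∫_K |d| 1_{|d| ≥ M} ρ dλ ds = 0`. -/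
theorem truncation_estimate_of_controls
    {E : Type*} [TopologicalSpace E] [PolishSpace E] [LocallyCompactSpace E]
    [MeasurableSpace E] [BorelSpace E]
    (lam : Measure E) [SigmaFinite lam] [IsFiniteMeasureOnCompacts lam]
    (T : ℝ) (hT : 0 < T) (Υ : ℝ) (hΥ : 0 < Υ)
    (lamT : Measure (ℝ × E))
    (hlamT : lamT = (volume.restrict (Set.Icc (0:ℝ) T)).prod lam)
    (d : ℝ × E → ℝ) (hdmeas : Measurable d)
    (hdsq : Integrable (fun p => |d p| ^ 2) lamT)
    (hexp : ∀ δ₃ : ℝ, 0 < δ₃ → ∀ X : Set (ℝ × E), MeasurableSet X → lamT X < ⊤ →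
      IntegrableOn (fun p => Real.exp (δ₃ * |d p|)) X lamT) :
    ∀ K : Set E, IsCompact K →
      ∀ ε : ℝ, 0 < ε → ∃ M₀ : ℝ, ∀ M : ℝ, M₀ ≤ M →
        ∀ ρ : ℝ × E → ℝ, Measurable ρ → (∀ p, 0 ≤ ρ p) →
          (∫⁻ p, ENNReal.ofReal (ρ p * Real.log (ρ p) - ρ p + 1) ∂lamT
            ≤ ENNReal.ofReal Υ) →
          ∫⁻ p in ((Set.univ : Set ℝ) ×ˢ K) ∩ {p : ℝ × E | M ≤ |d p|},
              ENNReal.ofReal (|d p| * ρ p) ∂lamT ≤ ENNReal.ofReal ε :=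
  truncation_estimate_of_controls_general lam T Υ hΥ lamT hlamT d hdmeas hexp
end
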